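/- arXiv:2211.15964 — 2 statements merged into one kernel-verified Lean document; each statement's English description precedes it below -/
import Mathlib

section
/- Let {Aₙ} be a sequence of events and ℱ a sub-σ-algebra such that P(Aₙ | ℱ) → 0 almost surely as n → ∞ and ∑ₙ P(Aₙᶜ ∩ Aₙ₊₁ | ℱ) < ∞ almost surely. Then P(limsup Aₙ | ℱ) = 0 almost surely. -/
open MeasureTheory Filter

noncomputable def cprob {Ω : Type*} {mΩ : MeasurableSpace Ω} (μ : Measure Ω)
    (𝓕 : MeasurableSpace Ω) (A : Set Ω) : Ω → ℝ :=
  μ[A.indicator (fun _ => (1 : ℝ)) | 𝓕]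

section Aux

variable {Ω : Type*} (𝓕 : MeasurableSpace Ω) [mΩ : MeasurableSpace Ω]
  (μ : Measure Ω) [IsProbabilityMeasure μ]

lemma cprob_nonneg (B : Set Ω) : 0 ≤ᵐ[μ] cprob μ 𝓕 B :=
  condExp_nonneg (Filter.Eventually.of_forall fun ω =>
    Set.indicator_nonneg (fun _ _ => zero_le_one) ω)

lemma cprob_le_one (h𝓕 : 𝓕 ≤ mΩ) {B : Set Ω} (hB : MeasurableSet B) :
    cprob μ 𝓕 B ≤ᵐ[μ] fun _ => (1 : ℝ) := by
  have h := condExp_mono (m := 𝓕)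
    ((integrable_const (μ := μ) (1 : ℝ)).indicator hB) (integrable_const (1 : ℝ))
    (Filter.Eventually.of_forall fun ω =>
      Set.indicator_le_self' (fun _ _ => zero_le_one) ω)
  calc cprob μ 𝓕 B ≤ᵐ[μ] μ[(fun _ => (1 : ℝ)) | 𝓕] := h
    _ = fun _ => (1 : ℝ) := condExp_const h𝓕 1

lemma cprob_setIntegral (h𝓕 : 𝓕 ≤ mΩ) {B S : Set Ω} (hB : MeasurableSet B)
    (hS : MeasurableSet[𝓕] S) :
    ∫ ω in S, cprob μ 𝓕 B ω ∂μ = (μ (B ∩ S)).toReal := by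
  rw [show (fun ω => cprob μ 𝓕 B ω) = cprob μ 𝓕 B from rfl]
  rw [cprob, setIntegral_condExp h𝓕 ((integrable_const (μ := μ) (1 : ℝ)).indicator hB) hS,
    setIntegral_indicator hB, setIntegral_const, smul_eq_mul, mul_one, Set.inter_comm, measureReal_def]

lemma cprob_tendsto_measure (h𝓕 : 𝓕 ≤ mΩ) (A : ℕ → Set Ω)
    (hA : ∀ n, MeasurableSet (A n))
    (htend : ∀ᵐ ω ∂μ, Tendsto (fun n => cprob μ 𝓕 (A n) ω) atTop (nhds 0)) :
    Tendsto (fun n => (μ (A n)).toReal) atTop (nhds 0) := by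
  have hconv : Tendsto (fun n => ∫ ω, cprob μ 𝓕 (A n) ω ∂μ) atTop
      (nhds (∫ _ : Ω, (0 : ℝ) ∂μ)) := by
    refine tendsto_integral_of_dominated_convergence (fun _ => (1 : ℝ))
      (fun n => (stronglyMeasurable_condExp.mono h𝓕).aestronglyMeasurable)
      (integrable_const 1) (fun n => ?_) htend
    filter_upwards [cprob_nonneg 𝓕 μ (A n), cprob_le_one 𝓕 μ h𝓕 (hA n)] with ω h0 h1
    rw [Real.norm_eq_abs, abs_le]
    exact ⟨by linarith [show (0 : ℝ) ≤ cprob μ 𝓕 (A n) ω from h0], h1⟩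
  have hintEq : ∀ n, ∫ ω, cprob μ 𝓕 (A n) ω ∂μ = (μ (A n)).toReal := by
    intro n
    rw [show (fun ω => cprob μ 𝓕 (A n) ω) = cprob μ 𝓕 (A n) from rfl, cprob,
      integral_condExp h𝓕, integral_indicator_const _ (hA n), smul_eq_mul, mul_one, measureReal_def]
  simpa [hintEq, integral_zero] using hconv

lemma cprob_limsup_inter_null (h𝓕 : 𝓕 ≤ mΩ) (E : ℕ → Set Ω)
    (hE : ∀ n, MeasurableSet (E n)) {S : Set Ω} (hS : MeasurableSet[𝓕] S)
    {c : ℝ} (hc : 0 ≤ c)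
    (hb : ∀ ω ∈ S, ∀ n : ℕ, ∑ k ∈ Finset.range n, cprob μ 𝓕 (E k) ω ≤ c) :
    μ (limsup E atTop ∩ S) = 0 := by
  have ints : ∀ k : ℕ, Integrable (fun ω => cprob μ 𝓕 (E k) ω) (μ.restrict S) :=
    fun k => (integrable_condExp : Integrable (cprob μ 𝓕 (E k)) μ).integrableOn
  have hbound : ∀ n : ℕ, ∑ k ∈ Finset.range n, μ (E k ∩ S) ≤ ENNReal.ofReal c := by
    intro n
    have h3 : ∫ ω in S, ∑ k ∈ Finset.range n, cprob μ 𝓕 (E k) ω ∂μ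
        ≤ ∫ _ω in S, c ∂μ := by
      refine setIntegral_mono_on (integrable_finset_sum _ fun k _ => ints k)
        (integrable_const _).integrableOn (h𝓕 _ hS) ?_
      intro ω hω
      exact hb ω hω n
    have h1 : ∑ k ∈ Finset.range n, (μ (E k ∩ S)).toReal ≤ c := by
      calc ∑ k ∈ Finset.range n, (μ (E k ∩ S)).toReal
          = ∑ k ∈ Finset.range n, ∫ ω in S, cprob μ 𝓕 (E k) ω ∂μ :=
            Finset.sum_congr rfl fun k _ =>
              (cprob_setIntegral 𝓕 μ h𝓕 (hE k) hS).symm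
        _ = ∫ ω in S, ∑ k ∈ Finset.range n, cprob μ 𝓕 (E k) ω ∂μ :=
            (integral_finset_sum (Finset.range n) fun k _ => ints k).symm
        _ ≤ ∫ _ω in S, c ∂μ := h3
        _ = (μ S).toReal * c := by rw [setIntegral_const, smul_eq_mul, measureReal_def]
        _ ≤ 1 * c := by
            have hμ1 : (μ S).toReal ≤ 1 := by
              simpa using ENNReal.toReal_mono (by simp)
                (prob_le_one (μ := μ) (s := S))
            exact mul_le_mul_of_nonneg_right hμ1 hc
        _ = c := one_mul _
    calc ∑ k ∈ Finset.range n, μ (E k ∩ S)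
        = ENNReal.ofReal (∑ k ∈ Finset.range n, (μ (E k ∩ S)).toReal) := by
          rw [ENNReal.ofReal_sum_of_nonneg (fun _ _ => ENNReal.toReal_nonneg)]
          exact Finset.sum_congr rfl fun k _ =>
            (ENNReal.ofReal_toReal (measure_ne_top _ _)).symm
      _ ≤ ENNReal.ofReal c := ENNReal.ofReal_le_ofReal h1
  have htsum : ∑' k, μ.restrict S (E k) ≠ ⊤ := by
    have hle : ∑' k, μ.restrict S (E k) ≤ ENNReal.ofReal c := by
      refine ENNReal.tsum_le_of_sum_range_le fun n => ?_
      calc ∑ k ∈ Finset.range n, μ.restrict S (E k)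
          = ∑ k ∈ Finset.range n, μ (E k ∩ S) := by
            refine Finset.sum_congr rfl fun k _ => ?_
            rw [Measure.restrict_apply (hE k)]
        _ ≤ ENNReal.ofReal c := hbound n
    exact ne_top_of_le_ne_top ENNReal.ofReal_ne_top hle
  have h0 : μ.restrict S (limsup E atTop) = 0 :=
    measure_limsup_atTop_eq_zero htsum
  rwa [Measure.restrict_apply' (h𝓕 _ hS)] at h0

lemma cprob_of_null {B : Set Ω} (hB : μ B = 0) : cprob μ 𝓕 B =ᵐ[μ] 0 := by
  have hind : B.indicator (fun _ => (1 : ℝ)) =ᵐ[μ] (0 : Ω → ℝ) := by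
    filter_upwards [measure_eq_zero_iff_ae_notMem.mp hB] with ω hω
    simp [Set.indicator_of_notMem hω]
  calc cprob μ 𝓕 B =ᵐ[μ] μ[(0 : Ω → ℝ) | 𝓕] := condExp_congr_ae hind
    _ = 0 := condExp_zero

end Aux

theorem stmt_3 {Ω : Type*} (𝓕 : MeasurableSpace Ω) {mΩ : MeasurableSpace Ω} (μ : Measure Ω)
    [IsProbabilityMeasure μ] (h𝓕 : 𝓕 ≤ mΩ)
    (A : ℕ → Set Ω) (hA : ∀ n, MeasurableSet (A n))
    (htend : ∀ᵐ ω ∂μ, Tendsto (fun n => cprob μ 𝓕 (A n) ω) atTop (nhds 0))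
    (hsum : ∀ᵐ ω ∂μ, Summable fun n => cprob μ 𝓕 ((A n)ᶜ ∩ A (n + 1)) ω) :
    cprob μ 𝓕 (limsup A atTop) =ᵐ[μ] 0 := by
  classical
  have hA' : ∀ n, MeasurableSet[mΩ] (A n) := fun n => hA n
  set E : ℕ → Set Ω := fun n => (A n)ᶜ ∩ A (n + 1) with hEdef
  have hEmeas : ∀ n, MeasurableSet[mΩ] (E n) := fun n =>
    (hA' n).compl.inter (hA' (n + 1))
  -- μ (liminf A) = 0
  have htoReal := cprob_tendsto_measure (mΩ := mΩ) 𝓕 μ h𝓕 A hA' htend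
  have hliminf : μ (liminf A atTop) = 0 := by
    have hK : ∀ K : ℕ, μ (⋂ k, ⋂ (_ : K ≤ k), A k) = 0 := by
      intro K
      have hle : ∀ n, K ≤ n → (μ (⋂ k, ⋂ (_ : K ≤ k), A k)).toReal ≤ (μ (A n)).toReal := by
        intro n hn
        exact ENNReal.toReal_mono (measure_ne_top _ _)
          (measure_mono (Set.iInter₂_subset n hn))
      have h0 : (μ (⋂ k, ⋂ (_ : K ≤ k), A k)).toReal ≤ 0 :=
        ge_of_tendsto htoReal (eventually_atTop.mpr ⟨K, hle⟩)
      have h0' := le_antisymm h0 ENNReal.toReal_nonneg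
      rcases (ENNReal.toReal_eq_zero_iff _).mp h0' with h | h
      · exact h
      · exact absurd h (measure_ne_top _ _)
    have hsub : liminf A atTop ⊆ ⋃ K : ℕ, ⋂ k, ⋂ (_ : K ≤ k), A k := by
      intro ω hω
      rw [mem_liminf_iff_eventually_mem, eventually_atTop] at hω
      obtain ⟨K, hK'⟩ := hω
      exact Set.mem_iUnion.mpr ⟨K, Set.mem_iInter₂.mpr hK'⟩
    exact measure_mono_null hsub (measure_iUnion_null hK)
  -- μ (limsup E) = 0
  set S : ℕ → Set Ω := fun c =>
    {ω | ∀ n : ℕ, ∑ k ∈ Finset.range n, cprob μ 𝓕 (E k) ω ≤ (c : ℝ)} with hSdef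
  have hSmeas : ∀ c : ℕ, MeasurableSet[𝓕] (S c) := by
    intro c
    have hiff : S c = ⋂ n : ℕ,
        {ω | ∑ k ∈ Finset.range n, cprob μ 𝓕 (E k) ω ≤ (c : ℝ)} := by
      ext ω; simp [hSdef, Set.mem_iInter]
    rw [hiff]
    refine MeasurableSet.iInter fun n => ?_
    exact measurableSet_le
      (Finset.measurable_sum _ fun k _ =>
        ((stronglyMeasurable_condExp :
          StronglyMeasurable[𝓕] (cprob μ 𝓕 (E k))).measurable)) measurable_const
  have hSc : ∀ c : ℕ, μ (limsup E atTop ∩ S c) = 0 := fun c =>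
    cprob_limsup_inter_null (mΩ := mΩ) 𝓕 μ h𝓕 E hEmeas (hSmeas c) (Nat.cast_nonneg c)
      (fun ω hω n => hω n)
  have hcover : ∀ᵐ ω ∂μ, ω ∈ ⋃ c : ℕ, S c := by
    have hnn : ∀ᵐ ω ∂μ, ∀ k, 0 ≤ cprob μ 𝓕 (E k) ω :=
      ae_all_iff.mpr fun k => cprob_nonneg (mΩ := mΩ) 𝓕 μ (E k)
    filter_upwards [hsum, hnn] with ω hs hn
    refine Set.mem_iUnion.mpr ⟨⌈∑' k, cprob μ 𝓕 (E k) ω⌉₊, fun n => ?_⟩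
    calc ∑ k ∈ Finset.range n, cprob μ 𝓕 (E k) ω
        ≤ ∑' k, cprob μ 𝓕 (E k) ω := Summable.sum_le_tsum _ (fun k _ => hn k) hs
      _ ≤ _ := Nat.le_ceil _
  have hlimsupE : μ (limsup E atTop) = 0 := by
    have h2 : μ ((⋃ c : ℕ, S c)ᶜ) = 0 := ae_iff.mp hcover
    have hsub2 : limsup E atTop ⊆
        (⋃ c : ℕ, limsup E atTop ∩ S c) ∪ (⋃ c : ℕ, S c)ᶜ := by
      intro ω hω
      by_cases h : ω ∈ ⋃ c : ℕ, S c
      · obtain ⟨c, hc⟩ := Set.mem_iUnion.mp h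
        exact Or.inl (Set.mem_iUnion.mpr ⟨c, hω, hc⟩)
      · exact Or.inr h
    exact measure_mono_null hsub2
      (measure_union_null (measure_iUnion_null hSc) h2)
  -- limsup A ⊆ liminf A ∪ limsup E
  have hsub : limsup A atTop ⊆ liminf A atTop ∪ limsup E atTop := by
    intro ω hω
    by_cases hE : ω ∈ limsup E atTop
    · exact Or.inr hE
    left
    rw [mem_limsup_iff_frequently_mem] at hω hE
    rw [Filter.not_frequently, eventually_atTop] at hE
    obtain ⟨K, hKE⟩ := hE
    rw [mem_liminf_iff_eventually_mem, eventually_atTop]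
    refine ⟨K, fun k hk => ?_⟩
    obtain ⟨m, hm, hmem⟩ := frequently_atTop.mp hω k
    have key : ∀ m : ℕ, k ≤ m → ω ∈ A m → ω ∈ A k := by
      intro m
      induction m with
      | zero => intro h h2; exact (Nat.le_zero.mp h) ▸ h2
      | succ m ih =>
        intro hkm hmem'
        rcases eq_or_lt_of_le hkm with rfl | hlt
        · exact hmem'
        · have hkm' : k ≤ m := Nat.lt_succ_iff.mp hlt
          refine ih hkm' ?_
          by_contra h'
          exact hKE m (le_trans hk hkm') ⟨h', hmem'⟩
    exact key m hm hmem
  have hlimsupA : μ (limsup A atTop) = 0 :=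
    measure_mono_null hsub (measure_union_null hliminf hlimsupE)
  exact cprob_of_null (mΩ := mΩ) 𝓕 μ hlimsupA
end

section
/- Let {Aₙ} be a sequence of events and ℱ a sub-σ-algebra such that P(Aₙ | ℱ) → 0 almost surely as n → ∞ and ∑ₙ P(Aₙ ∩ Aₙ₊₁ᶜ | ℱ) < ∞ almost surely. Then P(limsup Aₙ | ℱ) = 0 almost surely. -/
open MeasureTheory Filter

/-- If `ω ∈ A i`, and `ω` never exits between `i` and `m`, then `ω ∈ A m`. -/
lemma chain_aux {Ω : Type*} (A : ℕ → Set Ω) (ω : Ω) :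
    ∀ m i, i ≤ m → ω ∈ A i → (∀ j, i ≤ j → j < m → ω ∉ A j ∩ (A (j + 1))ᶜ) → ω ∈ A m := by
  intro m
  induction m with
  | zero => intro i hi hωi _; simpa [Nat.le_zero.mp hi] using hωi
  | succ m ih =>
    intro i hi hωi hex
    rcases Nat.lt_or_ge i (m + 1) with h | h
    · have him : i ≤ m := Nat.lt_succ_iff.mp h
      have hm : ω ∈ A m := ih i him hωi fun j hj hjm => hex j hj (Nat.lt_succ_of_lt hjm)
      by_contra hnot
      exact hex m him (Nat.lt_succ_self m) ⟨hm, hnot⟩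
    · have hieq : i = m + 1 := le_antisymm hi h
      exact hieq ▸ hωi

lemma int_ind {Ω : Type*} {mΩ : MeasurableSpace Ω} (μ : Measure Ω) [IsFiniteMeasure μ]
    {s : Set Ω} (hs : MeasurableSet s) : Integrable (s.indicator fun _ => (1 : ℝ)) μ :=
  (integrable_const 1).indicator hs

theorem stmt_4 {Ω : Type*} (𝓕 : MeasurableSpace Ω) {mΩ : MeasurableSpace Ω} (μ : Measure Ω)
    [IsProbabilityMeasure μ] (h𝓕 : 𝓕 ≤ mΩ)
    (A : ℕ → Set Ω) (hA : ∀ n, MeasurableSet (A n))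
    (htend : ∀ᵐ ω ∂μ, Tendsto (fun n => cprob μ 𝓕 (A n) ω) atTop (nhds 0))
    (hsum : ∀ᵐ ω ∂μ, Summable fun n => cprob μ 𝓕 (A n ∩ (A (n + 1))ᶜ) ω) :
    cprob μ 𝓕 (limsup A atTop) =ᵐ[μ] 0 := by
  classical
  haveI : SigmaFinite (μ.trim h𝓕) := inferInstance
  set E : ℕ → Set Ω := fun n => A n ∩ (A (n + 1))ᶜ with hE_def
  have hEmeas : ∀ n, MeasurableSet (E n) := fun n => (hA n).inter (hA (n + 1)).compl
  set U : ℕ → ℕ → Set Ω := fun n m => ⋃ j ∈ Finset.Icc n m, A j with hU_def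
  set u : ℕ → Set Ω := fun n => ⋃ j, A (j + n) with hu_def
  have hUmeas : ∀ n m, MeasurableSet (U n m) :=
    fun n m => (Finset.Icc n m).measurableSet_biUnion fun j _ => hA j
  have humeas : ∀ n, MeasurableSet (u n) := fun n => MeasurableSet.iUnion fun j => hA (j + n)
  have hint : ∀ s : Set Ω, MeasurableSet[mΩ] s →
      Integrable (s.indicator fun _ => (1 : ℝ)) μ :=
    fun _ hs => int_ind μ hs
  have hind_nonneg : ∀ (s : Set Ω) (ω : Ω), (0 : ℝ) ≤ s.indicator (fun _ => (1 : ℝ)) ω :=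
    fun s ω => Set.indicator_nonneg (fun _ _ => zero_le_one) ω
  -- pointwise indicator inequality
  have hptwise : ∀ n m ω, (U n m).indicator (fun _ => (1 : ℝ)) ω ≤
      (A m).indicator (fun _ => (1 : ℝ)) ω +
        ∑ j ∈ Finset.Ico n m, (E j).indicator (fun _ => (1 : ℝ)) ω := by
    intro n m ω
    have hsum_nn : (0 : ℝ) ≤ ∑ j ∈ Finset.Ico n m, (E j).indicator (fun _ => (1 : ℝ)) ω :=
      Finset.sum_nonneg fun k _ => hind_nonneg _ _
    by_cases hω : ω ∈ U n m
    · have hωU : (U n m).indicator (fun _ => (1 : ℝ)) ω = 1 := Set.indicator_of_mem hω _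
      have hω' : ∃ i, i ∈ Finset.Icc n m ∧ ω ∈ A i := by
        have := hω
        simp only [hU_def, Set.mem_iUnion] at this
        obtain ⟨i, hi, hωi⟩ := this
        exact ⟨i, hi, hωi⟩
      obtain ⟨i, hi, hωi⟩ := hω'
      rw [Finset.mem_Icc] at hi
      by_cases hex : ∃ j ∈ Finset.Ico n m, ω ∈ E j
      · obtain ⟨j, hj, hωj⟩ := hex
        have h1 : (1 : ℝ) ≤ ∑ j ∈ Finset.Ico n m, (E j).indicator (fun _ => (1 : ℝ)) ω := by
          have := Finset.single_le_sum
            (f := fun j => (E j).indicator (fun _ => (1 : ℝ)) ω)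
            (fun k _ => hind_nonneg _ _) hj
          simpa [Set.indicator_of_mem hωj] using this
        have := hind_nonneg (A m) ω
        linarith [hωU.le]
      · push_neg at hex
        have hm : ω ∈ A m := chain_aux A ω m i hi.2 hωi fun j hj1 hj2 =>
          hex j (Finset.mem_Ico.mpr ⟨le_trans hi.1 hj1, hj2⟩)
        rw [hωU, Set.indicator_of_mem hm]
        linarith
    · rw [Set.indicator_of_notMem hω]
      exact add_nonneg (hind_nonneg _ _) hsum_nn
  -- conditional expectation inequality
  have hcond : ∀ n m, ∀ᵐ ω ∂μ, cprob μ 𝓕 (U n m) ω ≤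
      cprob μ 𝓕 (A m) ω + ∑ j ∈ Finset.Ico n m, cprob μ 𝓕 (E j) ω := by
    intro n m
    have hintsum : Integrable (∑ j ∈ Finset.Ico n m,
        (E j).indicator fun _ => (1 : ℝ)) μ :=
      integrable_finset_sum' _ fun j _ => hint _ ((hEmeas j))
    have hmono := condExp_mono (m := 𝓕) (hint _ ((hUmeas n m)))
      ((hint _ ((hA m))).add hintsum)
      (Eventually.of_forall fun ω => by
        simpa [Finset.sum_apply] using hptwise n m ω)
    have hadd := condExp_add (m := 𝓕) (μ := μ) (hint _ ((hA m))) hintsum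
    have hsum' := condExp_finsetSum (m := 𝓕) (μ := μ) (s := Finset.Ico n m)
      (f := fun j => (E j).indicator fun _ => (1 : ℝ)) fun j _ => hint _ ((hEmeas j))
    filter_upwards [hmono, hadd, hsum'] with ω h1 h2 h3
    simp only [Pi.add_apply, Finset.sum_apply] at h1 h2 h3 ⊢
    simp only [cprob]
    rw [h3] at h2
    linarith [h1, h2.le]
  -- L¹ convergence and a.e. convergent subsequence
  have hae : ∀ n : ℕ, ∃ ns : ℕ → ℕ, StrictMono ns ∧ ∀ᵐ ω ∂μ,
      Tendsto (fun k => (condExpL1 h𝓕 μ ((U n (ns k)).indicator fun _ => (1 : ℝ)) : Ω → ℝ) ω)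
        atTop (nhds ((condExpL1 h𝓕 μ ((u n).indicator fun _ => (1 : ℝ)) : Ω → ℝ) ω)) := by
    intro n
    have hL1 : Tendsto (fun m => condExpL1 h𝓕 μ ((U n m).indicator fun _ => (1 : ℝ))) atTop
        (nhds (condExpL1 h𝓕 μ ((u n).indicator fun _ => (1 : ℝ)))) := by
      refine tendsto_condExpL1_of_dominated_convergence h𝓕 (fun _ => (1 : ℝ))
        (fun m => (hint _ ((hUmeas n m))).aestronglyMeasurable) (integrable_const 1)
        (fun m => Eventually.of_forall fun ω => ?_) (Eventually.of_forall fun ω => ?_)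
      · by_cases hω : ω ∈ U n m <;> simp [Set.indicator_of_mem, Set.indicator_of_notMem, hω]
      · by_cases hω : ω ∈ u n
        · have hω' : ∃ j, ω ∈ A (j + n) := by
            have := hω
            simp only [hu_def, Set.mem_iUnion] at this
            exact this
          obtain ⟨j, hj⟩ := hω'
          rw [Set.indicator_of_mem hω]
          refine tendsto_atTop_of_eventually_const (i₀ := j + n) fun m hm => ?_
          refine Set.indicator_of_mem ?_ _
          have : ω ∈ ⋃ i ∈ Finset.Icc n m, A i :=
            Set.mem_biUnion (Finset.mem_Icc.mpr ⟨Nat.le_add_left n j, hm⟩) hj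
          simpa [hU_def] using this
        · rw [Set.indicator_of_notMem hω]
          have hz : ∀ m, (U n m).indicator (fun _ => (1 : ℝ)) ω = 0 := by
            intro m
            refine Set.indicator_of_notMem (fun hmem => hω ?_) _
            have hmem' : ∃ i, i ∈ Finset.Icc n m ∧ ω ∈ A i := by
              have := hmem
              simp only [hU_def, Set.mem_iUnion] at this
              obtain ⟨i, hi, hωi⟩ := this
              exact ⟨i, hi, hωi⟩
            obtain ⟨i, hi, hωi⟩ := hmem'
            rw [Finset.mem_Icc] at hi
            have : ω ∈ A (i - n + n) := by rwa [Nat.sub_add_cancel hi.1]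
            simpa [hu_def] using Set.mem_iUnion.mpr ⟨i - n, this⟩
          simp only [hz]
          exact tendsto_const_nhds
    have hmeasT : TendstoInMeasure μ
        (fun m => (condExpL1 h𝓕 μ ((U n m).indicator fun _ => (1 : ℝ)) : Ω → ℝ)) atTop
        (condExpL1 h𝓕 μ ((u n).indicator fun _ => (1 : ℝ)) : Ω → ℝ) := by
      refine tendstoInMeasure_of_tendsto_eLpNorm (p := 1) one_ne_zero
        (fun m => (Lp.memLp _).aestronglyMeasurable) (Lp.memLp _).aestronglyMeasurable ?_
      exact (Lp.tendsto_Lp_iff_tendsto_eLpNorm' _ _).mp hL1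
    exact hmeasT.exists_seq_tendsto_ae
  choose ns hns hns_ae using hae
  -- identifications of condexp with condExpL1
  have heqU : ∀ n m, cprob μ 𝓕 (U n m) =ᵐ[μ]
      (condExpL1 h𝓕 μ ((U n m).indicator fun _ => (1 : ℝ)) : Ω → ℝ) :=
    fun n m => condExp_ae_eq_condExpL1 h𝓕 _
  have hequ : ∀ n, cprob μ 𝓕 (u n) =ᵐ[μ]
      (condExpL1 h𝓕 μ ((u n).indicator fun _ => (1 : ℝ)) : Ω → ℝ) :=
    fun n => condExp_ae_eq_condExpL1 h𝓕 _
  -- monotonicity: limsup ⊆ u n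
  have hlimsub : ∀ n, limsup A atTop ⊆ u n := by
    intro n
    have h1 : limsup A atTop = ⨅ n, ⨆ i, A (i + n) := limsup_eq_iInf_iSup_of_nat'
    calc limsup A atTop ≤ ⨆ i, A (i + n) := h1 ▸ iInf_le _ n
    _ = u n := rfl
  have hmono : ∀ n, ∀ᵐ ω ∂μ, cprob μ 𝓕 (limsup A atTop) ω ≤ cprob μ 𝓕 (u n) ω := by
    intro n
    exact condExp_mono (hint _ ((MeasurableSet.measurableSet_limsup hA))) (hint _ ((humeas n)))
      (Eventually.of_forall fun ω =>
        Set.indicator_le_indicator_of_subset (hlimsub n) (fun _ => zero_le_one) ω)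
  have hlim_nonneg : ∀ᵐ ω ∂μ, 0 ≤ cprob μ 𝓕 (limsup A atTop) ω := by
    have := condExp_nonneg (μ := μ) (m := 𝓕)
      (Eventually.of_forall fun ω => hind_nonneg (limsup A atTop) ω)
    filter_upwards [this] with ω hω using hω
  have hg0 : ∀ n, ∀ᵐ ω ∂μ, 0 ≤ cprob μ 𝓕 (E n) ω := by
    intro n
    have := condExp_nonneg (μ := μ) (m := 𝓕)
      (Eventually.of_forall fun ω => hind_nonneg (E n) ω)
    filter_upwards [this] with ω hω using hω
  -- final pointwise argument
  filter_upwards [htend, hsum, ae_all_iff.2 hg0,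
    ae_all_iff.2 fun n => ae_all_iff.2 (hcond n),
    ae_all_iff.2 hmono, hlim_nonneg, ae_all_iff.2 hns_ae,
    ae_all_iff.2 fun n => ae_all_iff.2 (heqU n), ae_all_iff.2 hequ]
    with ω ht hs hg0ω hcondω hmonoω h0 hsubω heqω hequω
  have key : ∀ n, cprob μ 𝓕 (limsup A atTop) ω ≤ ∑' k, cprob μ 𝓕 (E (k + n)) ω := by
    intro n
    have hsum_n : Summable fun k => cprob μ 𝓕 (E (k + n)) ω := (summable_nat_add_iff n).mpr hs
    have htu : Tendsto (fun k => cprob μ 𝓕 (U n (ns n k)) ω) atTop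
        (nhds (cprob μ 𝓕 (u n) ω)) := by
      rw [hequω n]
      exact Tendsto.congr (fun k => (heqω n (ns n k)).symm) (hsubω n)
    have hbound : ∀ k, cprob μ 𝓕 (U n (ns n k)) ω ≤
        cprob μ 𝓕 (A (ns n k)) ω + ∑' k, cprob μ 𝓕 (E (k + n)) ω := by
      intro k
      refine (hcondω n (ns n k)).trans (add_le_add_right ?_ _)
      rw [Finset.sum_Ico_eq_sum_range]
      calc ∑ i ∈ Finset.range (ns n k - n), cprob μ 𝓕 (E (n + i)) ω
          = ∑ i ∈ Finset.range (ns n k - n), cprob μ 𝓕 (E (i + n)) ω :=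
            Finset.sum_congr rfl fun i _ => by rw [add_comm]
        _ ≤ ∑' k, cprob μ 𝓕 (E (k + n)) ω := Summable.sum_le_tsum _ (fun i _ => hg0ω _) hsum_n
    have hAn : Tendsto (fun k => cprob μ 𝓕 (A (ns n k)) ω) atTop (nhds 0) :=
      ht.comp (hns n).tendsto_atTop
    have hle := le_of_tendsto_of_tendsto' htu (hAn.add tendsto_const_nhds) hbound
    rw [zero_add] at hle
    exact (hmonoω n).trans hle
  have hT : Tendsto (fun n => ∑' k, cprob μ 𝓕 (E (k + n)) ω) atTop (nhds 0) :=
    tendsto_sum_nat_add fun j => cprob μ 𝓕 (E j) ω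
  have hc0 : cprob μ 𝓕 (limsup A atTop) ω ≤ 0 := ge_of_tendsto' hT key
  show cprob μ 𝓕 (limsup A atTop) ω = (0 : Ω → ℝ) ω
  simp only [Pi.zero_apply]
  exact le_antisymm hc0 h0
end
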